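/- Let C be an additive category, A and B chain complexes in C, and X a homotopically isolated summand of A with respect to B. If the space of chain maps from A to B modulo homotopy is one-dimensional over a field k, and φ, ψ: A → B are chain maps that agree and are nonzero on X, then φ and ψ are homotopic. -/

import Mathlib

/-!
A homotopy `c • φ ≃ d • ψ` restricts to an equality `c • φ|X = d • ψ|X` on the homotopically
isolated summand `X`, because `dh + hd` vanishes there. As `φ|X = ψ|X ≠ 0`, this forces
`c = d ≠ 0`, and dividing the homotopy by `c` gives `φ ≃ ψ`.
-/

open CategoryTheory

section

variable {V : Type*} [Category V] [Preadditive V] {ι : Type*} {c : ComplexShape ι}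
  {A B : HomologicalComplex V c}

def HomologicalComplex.IsHomotopicallyIsolated {X : V} (n : ι) (s : X ⟶ A.X n)
    (B : HomologicalComplex V c) : Prop :=
  ∀ hom : ∀ i j, A.X i ⟶ B.X j, s ≫ (dNext n hom + prevD n hom) = 0

theorem HomologicalComplex.IsHomotopicallyIsolated.comp_f_eq {X : V} {n : ι} {s : X ⟶ A.X n}
    (hs : IsHomotopicallyIsolated n s B) {f g : A ⟶ B} (H : Homotopy f g) :
    s ≫ f.f n = s ≫ g.f n := by
  rw [H.comm n, Preadditive.comp_add, hs H.hom, zero_add]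

def Homotopy.ofSMul {R : Type*} [DivisionRing R] [Linear R V] {f g : A ⟶ B} {a : R}
    (ha : a ≠ 0) (H : Homotopy (a • f) (a • g)) : Homotopy f g :=
  (Homotopy.ofEq (inv_smul_smul₀ ha f).symm).trans
    ((H.smul a⁻¹).trans (Homotopy.ofEq (inv_smul_smul₀ ha g)))

end

theorem homotopically_isolated_agreement_implies_homotopic_general
    {k : Type*} [Field k] {V : Type*} [Category V] [Preadditive V] [Linear k V]
    {A B : HomologicalComplex V (ComplexShape.down ℤ)} (n : ℤ)
    (X : V) (ι : X ⟶ A.X n)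
    (hiso : ∀ hom : ∀ i j, A.X i ⟶ B.X j, ι ≫ (dNext n hom + prevD n hom) = 0)
    (hone : ∀ f g : A ⟶ B, ∃ c d : k, ¬(c = 0 ∧ d = 0) ∧ Nonempty (Homotopy (c • f) (d • g)))
    (φ ψ : A ⟶ B)
    (hagree : ι ≫ φ.f n = ι ≫ ψ.f n)
    (hnonzero : ι ≫ φ.f n ≠ 0) :
    Nonempty (Homotopy φ ψ) := by
  obtain ⟨c, d, hcd, ⟨H⟩⟩ := hone φ ψ
  have hscaled : c • (ι ≫ φ.f n) = d • (ι ≫ φ.f n) := by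
    simpa only [HomologicalComplex.smul_f_apply, Linear.comp_smul, hagree]
      using HomologicalComplex.IsHomotopicallyIsolated.comp_f_eq hiso H
  obtain rfl : c = d := smul_left_injective k hnonzero hscaled
  exact ⟨H.ofSMul fun hc ↦ hcd ⟨hc, hc⟩⟩

/-- If the space of chain maps A → B modulo homotopy is one-dimensional over a field k, X is a
homotopically isolated summand of A with respect to B, and φ, ψ : A → B agree and are nonzero
on X, then φ and ψ are homotopic. -/
theorem homotopically_isolated_agreement_implies_homotopic
    {k : Type*} [Field k] {V : Type*} [Category V] [Preadditive V] [Linear k V]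
    {A B : HomologicalComplex V (ComplexShape.down ℤ)} (n : ℤ)
    (X : V) (ι : X ⟶ A.X n) (r : A.X n ⟶ X) (hr : ι ≫ r = 𝟙 X)
    (hiso : ∀ hom : ∀ i j, A.X i ⟶ B.X j, ι ≫ (dNext n hom + prevD n hom) = 0)
    (hone : ∀ f g : A ⟶ B, ∃ c d : k, ¬(c = 0 ∧ d = 0) ∧ Nonempty (Homotopy (c • f) (d • g)))
    (hnontriv : ∃ f : A ⟶ B, ¬Nonempty (Homotopy f 0))
    (φ ψ : A ⟶ B)
    (hagree : ι ≫ φ.f n = ι ≫ ψ.f n)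
    (hnonzero : ι ≫ φ.f n ≠ 0) :
    Nonempty (Homotopy φ ψ) :=
  homotopically_isolated_agreement_implies_homotopic_general n X ι hiso hone φ ψ hagree hnonzero
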